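/- For all nonnegative integers n: r_{2n}(s,q) = sum_{k=0}^n s^{2k} (-q/s; q^2)_k (-s; q^2)_{n-k} (n choose k)_{q^2}, where (x;q^2)_m = prod_{j=0}^{m-1}(1 - q^{2j} x). (Note s^{2k}(-q/s;q^2)_k = prod_{i=0}^{k-1}(s^2 + q^{2i+1}s) is polynomial in s.) -/

import Mathlib

/-!
Write `F_n` for the right-hand side and `G_n` for the same sum with `(-s; q²)_{n+1-k}` in place
of `(-s; q²)_{n-k}`. The Rogers-Szegő polynomials satisfy the three-term recurrence
`r_{m+2} = (1 + s) r_{m+1} + (q^{m+1} - 1) s r_m`, which follows from the two Pascal rules and the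
`q`-absorption identity for Gaussian binomials. Expanding `F_{n+1}` and `G_{n+1}` with the Pascal
rules in base `q²` shows that the interleaved sequence `F_0, G_0, F_1, G_1, …` satisfies the same
recurrence, and it starts with `r_0 = 1`, `r_1 = 1 + s`.
-/

open Finset

/-- Gaussian (q-)binomial coefficient, defined over any commutative ring by the
Pascal-type recurrence `[n+1, k+1] = [n, k] + q^(k+1) * [n, k+1]`. -/
def qbinom {R : Type*} [CommRing R] (q : R) : ℕ → ℕ → R
  | _, 0 => 1
  | 0, _ + 1 => 0
  | n + 1, k + 1 => qbinom q n k + q ^ (k + 1) * qbinom q n (k + 1)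
/-- Rogers-Szegő polynomial `r_n(s,q) = ∑_{j=0}^n [n,j]_q s^j`. -/
def rs {R : Type*} [CommRing R] (n : ℕ) (s q : R) : R :=
  ∑ j ∈ Finset.range (n + 1), qbinom q n j * s ^ j

section QBinom

variable {R : Type*} [CommRing R] (q : R)

@[simp]
lemma qbinom_zero_right (n : ℕ) : qbinom q n 0 = 1 := by
  cases n <;> rfl

lemma qbinom_succ_succ (n k : ℕ) :
    qbinom q (n + 1) (k + 1) = qbinom q n k + q ^ (k + 1) * qbinom q n (k + 1) :=
  rfl

lemma qbinom_eq_zero_of_lt : ∀ {n k : ℕ}, n < k → qbinom q n k = 0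
  | 0, _ + 1, _ => rfl
  | n + 1, k + 1, h => by
    rw [qbinom_succ_succ, qbinom_eq_zero_of_lt (by omega), qbinom_eq_zero_of_lt (by omega)]
    ring

lemma qbinom_succ_self (n : ℕ) : qbinom q n (n + 1) = 0 :=
  qbinom_eq_zero_of_lt q n.lt_succ_self

/-- The `q`-analogue of `Nat.choose_succ_right_eq`. -/
lemma qbinom_succ_right_eq : ∀ n k : ℕ,
    qbinom q n (k + 1) * (q ^ (k + 1) - 1) = qbinom q n k * (q ^ (n - k) - 1)
  | 0, 0 => by simp [qbinom_succ_self]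
  | 0, k + 1 => by simp [qbinom_eq_zero_of_lt]
  | n + 1, 0 => by
    have ih := qbinom_succ_right_eq n 0
    rw [qbinom_succ_succ]
    simp only [qbinom_zero_right, zero_add, pow_one, Nat.sub_zero] at ih ⊢
    linear_combination q * ih
  | n + 1, k + 1 => by
    have ih₀ := qbinom_succ_right_eq n k
    have ih₁ := qbinom_succ_right_eq n (k + 1)
    rw [qbinom_succ_succ, qbinom_succ_succ, Nat.add_sub_add_right]
    rcases lt_trichotomy k n with hk | rfl | hk
    · obtain ⟨m, rfl⟩ : ∃ m, n = k + 1 + m := ⟨n - (k + 1), by omega⟩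
      rw [show k + 1 + m - k = m + 1 by omega, show k + 1 + m - (k + 1) = m by omega] at *
      linear_combination q ^ (k + 2) * ih₁ + ih₀
    · simp [qbinom_succ_self, qbinom_eq_zero_of_lt]
    · rw [qbinom_eq_zero_of_lt q hk, qbinom_eq_zero_of_lt q (by omega : n < k + 1),
        qbinom_eq_zero_of_lt q (by omega : n < k + 2)]
      ring

lemma qbinom_succ_succ' (n k : ℕ) :
    qbinom q (n + 1) (k + 1) = qbinom q n (k + 1) + q ^ (n - k) * qbinom q n k := by
  rw [qbinom_succ_succ]
  linear_combination qbinom_succ_right_eq q n k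

/-- The `q`-analogue of `Nat.choose_mul_succ_eq`. -/
lemma qbinom_mul_succ_eq (n k : ℕ) :
    qbinom q n k * (q ^ (n + 1) - 1) = qbinom q (n + 1) k * (q ^ (n + 1 - k) - 1) := by
  cases k with
  | zero => simp
  | succ k =>
    rw [qbinom_succ_succ, Nat.add_sub_add_right]
    rcases le_or_gt k n with hk | hk
    · have e : q ^ (n - k) * q ^ (k + 1) = q ^ (n + 1) := by rw [← pow_add]; congr 1; omega
      linear_combination qbinom_succ_right_eq q n k - qbinom q n (k + 1) * e
    · simp [qbinom_eq_zero_of_lt, hk, Nat.lt_succ_of_lt hk]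

lemma sum_range_qbinom_mul_of_lt {n N : ℕ} (h : n < N) (f : ℕ → R) :
    ∑ k ∈ range N, qbinom q n k * f k = ∑ k ∈ range (n + 1), qbinom q n k * f k := by
  refine (sum_subset (range_subset_range.2 h) fun k _ hk => ?_).symm
  rw [qbinom_eq_zero_of_lt q (by simpa using hk), zero_mul]

lemma sum_range_qbinom_succ_mul (n : ℕ) (f : ℕ → R) :
    ∑ k ∈ range (n + 2), qbinom q (n + 1) k * f k
      = ∑ k ∈ range (n + 1), qbinom q n k * (f (k + 1) + q ^ k * f k) :=
  calc ∑ k ∈ range (n + 2), qbinom q (n + 1) k * f k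
      = ∑ k ∈ range (n + 1), (qbinom q n k * f (k + 1)
          + qbinom q n (k + 1) * (q ^ (k + 1) * f (k + 1))) + f 0 := by
        rw [sum_range_succ', qbinom_zero_right, one_mul]
        exact congrArg (· + f 0) (sum_congr rfl fun k _ => by rw [qbinom_succ_succ]; ring)
    _ = ∑ k ∈ range (n + 1), qbinom q n k * f (k + 1)
          + ∑ k ∈ range (n + 2), qbinom q n k * (q ^ k * f k) := by
        rw [sum_add_distrib, sum_range_succ' (fun k => qbinom q n k * (q ^ k * f k)),
          qbinom_zero_right, pow_zero, one_mul, one_mul, add_assoc]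
    _ = _ := by
        rw [sum_range_qbinom_mul_of_lt q (by omega) fun k => q ^ k * f k, ← sum_add_distrib]
        simp only [mul_add]

lemma sum_range_qbinom_succ_mul' (n : ℕ) (f : ℕ → R) :
    ∑ k ∈ range (n + 2), qbinom q (n + 1) k * f k
      = ∑ k ∈ range (n + 1), qbinom q n k * (f k + q ^ (n - k) * f (k + 1)) :=
  calc ∑ k ∈ range (n + 2), qbinom q (n + 1) k * f k
      = ∑ k ∈ range (n + 1), (qbinom q n (k + 1) * f (k + 1)
          + qbinom q n k * (q ^ (n - k) * f (k + 1))) + f 0 := by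
        rw [sum_range_succ', qbinom_zero_right, one_mul]
        exact congrArg (· + f 0) (sum_congr rfl fun k _ => by rw [qbinom_succ_succ']; ring)
    _ = ∑ k ∈ range (n + 2), qbinom q n k * f k
          + ∑ k ∈ range (n + 1), qbinom q n k * (q ^ (n - k) * f (k + 1)) := by
        rw [sum_add_distrib, sum_range_succ' (fun k => qbinom q n k * f k),
          qbinom_zero_right, one_mul, add_right_comm]
    _ = _ := by
        rw [sum_range_qbinom_mul_of_lt q (by omega), ← sum_add_distrib]
        simp only [mul_add]

end QBinom

section RogersSzego

variable {R : Type*} [CommRing R] (s q : R)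

lemma rs_succ_succ (m : ℕ) :
    rs (m + 2) s q = (1 + s) * rs (m + 1) s q + (q ^ (m + 1) - 1) * s * rs m s q := by
  have coeff (j : ℕ) : qbinom q (m + 2) (j + 1)
      = qbinom q (m + 1) (j + 1) + qbinom q (m + 1) j + (q ^ (m + 1) - 1) * qbinom q m j := by
    linear_combination qbinom_succ_succ' q (m + 1) j - qbinom_mul_succ_eq q m j
  have shifted : rs (m + 1) s q
      = ∑ j ∈ range (m + 2), qbinom q (m + 1) (j + 1) * s ^ (j + 1) + 1 := by
    rw [rs, ← sum_range_qbinom_mul_of_lt q (by omega : m + 1 < m + 3), sum_range_succ',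
      qbinom_zero_right, pow_zero, mul_one]
  have extended : rs m s q = ∑ j ∈ range (m + 2), qbinom q m j * s ^ j :=
    (sum_range_qbinom_mul_of_lt q (by omega) _).symm
  calc rs (m + 2) s q
      = ∑ j ∈ range (m + 2), (qbinom q (m + 1) (j + 1) * s ^ (j + 1)
          + s * (qbinom q (m + 1) j * s ^ j) + (q ^ (m + 1) - 1) * s * (qbinom q m j * s ^ j))
        + 1 := by
        rw [rs, sum_range_succ', qbinom_zero_right, pow_zero, mul_one]
        congr 1
        refine sum_congr rfl fun j _ => ?_
        rw [coeff]
        ring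
    _ = (∑ j ∈ range (m + 2), qbinom q (m + 1) (j + 1) * s ^ (j + 1) + 1)
        + s * rs (m + 1) s q + (q ^ (m + 1) - 1) * s * rs m s q := by
        rw [sum_add_distrib, sum_add_distrib, ← mul_sum, ← mul_sum, extended, rs]
        ring
    _ = _ := by
        rw [← shifted]
        ring

/-- `pochOdd s q k = s^{2k} (-q/s; q²)_k`. -/
def pochOdd (k : ℕ) : R := ∏ i ∈ range k, (s ^ 2 + q ^ (2 * i + 1) * s)

/-- `pochEven s q m = (-s; q²)_m`. -/
def pochEven (m : ℕ) : R := ∏ j ∈ range m, (1 + q ^ (2 * j) * s)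

def evenSum (n : ℕ) : R :=
  ∑ k ∈ range (n + 1), qbinom (q ^ 2) n k * (pochOdd s q k * pochEven s q (n - k))

def oddSum (n : ℕ) : R :=
  ∑ k ∈ range (n + 1), qbinom (q ^ 2) n k * (pochOdd s q k * pochEven s q (n + 1 - k))

lemma pochOdd_succ (k : ℕ) :
    pochOdd s q (k + 1) = pochOdd s q k * (s ^ 2 + q ^ (2 * k + 1) * s) :=
  prod_range_succ _ _

lemma pochEven_succ (m : ℕ) : pochEven s q (m + 1) = pochEven s q m * (1 + q ^ (2 * m) * s) :=
  prod_range_succ _ _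

lemma evenSum_succ (n : ℕ) :
    evenSum s q (n + 1) = (1 + s) * oddSum s q n + (q ^ (2 * n + 1) - 1) * s * evenSum s q n := by
  rw [evenSum, sum_range_qbinom_succ_mul', oddSum, evenSum, mul_sum, mul_sum,
    ← sum_add_distrib]
  refine sum_congr rfl fun k hk => ?_
  obtain ⟨m, rfl⟩ : ∃ m, n = k + m := ⟨n - k, by rw [mem_range] at hk; omega⟩
  simp only [show k + m + 1 - k = m + 1 by omega, show k + m + 1 - (k + 1) = m by omega,
    Nat.add_sub_cancel_left, pochOdd_succ, pochEven_succ]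
  ring

lemma oddSum_succ (n : ℕ) :
    oddSum s q (n + 1)
      = (1 + s) * evenSum s q (n + 1) + (q ^ (2 * n + 2) - 1) * s * oddSum s q n := by
  set P := pochOdd s q
  set E := pochEven s q
  have expandOdd := sum_range_qbinom_succ_mul (q ^ 2) n fun k => P k * E (n + 1 + 1 - k)
  have expandEven := sum_range_qbinom_succ_mul (q ^ 2) n fun k => P k * E (n + 1 - k)
  have expandEven' := sum_range_qbinom_succ_mul' (q ^ 2) n fun k => P k * E (n + 1 - k)
  -- no single expansion of `evenSum s q (n + 1)` matches termwise, but one copy of each does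
  have termwise : ∑ k ∈ range (n + 1), qbinom (q ^ 2) n k *
        (P (k + 1) * E (n + 1 + 1 - (k + 1)) + (q ^ 2) ^ k * (P k * E (n + 1 + 1 - k)))
      = ∑ k ∈ range (n + 1), qbinom (q ^ 2) n k *
          (P (k + 1) * E (n + 1 - (k + 1)) + (q ^ 2) ^ k * (P k * E (n + 1 - k)))
        + s * ∑ k ∈ range (n + 1), qbinom (q ^ 2) n k *
          (P k * E (n + 1 - k) + (q ^ 2) ^ (n - k) * (P (k + 1) * E (n + 1 - (k + 1))))
        + (q ^ (2 * n + 2) - 1) * s * oddSum s q n := by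
    rw [oddSum, mul_sum, mul_sum, ← sum_add_distrib, ← sum_add_distrib]
    refine sum_congr rfl fun k hk => ?_
    obtain ⟨m, rfl⟩ : ∃ m, n = k + m := ⟨n - k, by rw [mem_range] at hk; omega⟩
    simp only [show k + m + 1 + 1 - (k + 1) = m + 1 by omega,
      show k + m + 1 + 1 - k = m + 2 by omega, show k + m + 1 - (k + 1) = m by omega,
      show k + m + 1 - k = m + 1 by omega,
      Nat.add_sub_cancel_left, P, E, pochOdd_succ, pochEven_succ]
    ring
  rw [oddSum, evenSum]
  linear_combination expandOdd + termwise - expandEven - s * expandEven'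

lemma rs_two_mul_and_rs_two_mul_add_one (n : ℕ) :
    rs (2 * n) s q = evenSum s q n ∧ rs (2 * n + 1) s q = oddSum s q n := by
  induction n with
  | zero =>
    refine ⟨by simp [rs, evenSum, pochOdd, pochEven], ?_⟩
    simp [rs, oddSum, pochOdd, pochEven, sum_range_succ, qbinom_succ_succ, qbinom_succ_self]
  | succ n ih =>
    have hEven : rs (2 * n + 2) s q = evenSum s q (n + 1) := by
      rw [rs_succ_succ, ih.1, ih.2, evenSum_succ]
    refine ⟨hEven, ?_⟩
    rw [show 2 * (n + 1) + 1 = 2 * n + 1 + 2 by ring, rs_succ_succ, hEven, ih.2, oddSum_succ]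

end RogersSzego

theorem stmt10 {R : Type*} [CommRing R] (s q : R) (n : ℕ) :
    rs (2 * n) s q =
      ∑ k ∈ Finset.range (n + 1),
        (∏ i ∈ Finset.range k, (s ^ 2 + q ^ (2 * i + 1) * s)) *
          (∏ j ∈ Finset.range (n - k), (1 + q ^ (2 * j) * s)) * qbinom (q ^ 2) n k := by
  rw [(rs_two_mul_and_rs_two_mul_add_one s q n).1]
  exact sum_congr rfl fun k _ => mul_comm _ _
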